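/- arXiv:math/0105252 — 6 statements merged into one kernel-verified Lean document; each statement's English description precedes it below -/
import Mathlib

section
/- Under assumptions (iv), (v), (vi), for every B ∈ ℬ and every B'' ∈ ℬ'' one has P({X' ∈ B''} ∩ C ∩ {X ∈ B}) = P({X' ∈ B''} ∩ C) · π(B). (Proposition 6.1 of the paper.) -/
open MeasureTheory ProbabilityTheory

theorem ProbabilityTheory.measure_inter_eq_mul_of_cond_eq {Ω : Type*} [MeasurableSpace Ω]
    {μ : Measure Ω} [IsFiniteMeasure μ] {s t : Set Ω} (hs : MeasurableSet s)
    (h : μ s ≠ 0 → μ[t | s] = μ t) : μ (t ∩ s) = μ t * μ s := by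
  obtain hs0 | hs0 := eq_or_ne (μ s) 0
  · simp [hs0, measure_inter_null_of_null_right]
  · rw [← h hs0, cond_mul_eq_inter hs, Set.inter_comm]

theorem stmt0_general
    {Ω 𝓧 𝓧' : Type*} [MeasurableSpace Ω] [MeasurableSpace 𝓧] [MeasurableSpace 𝓧']
    (P : Measure Ω) [IsProbabilityMeasure P]
    (π : Measure 𝓧) [IsProbabilityMeasure π]
    (B' : Set 𝓧')
    (X : Ω → 𝓧) (X' : Ω → 𝓧') (Y : Ω → 𝓧') (C : Set Ω)
    -- (iv): X is measurable with law π
    (hXmeas : Measurable X) (hXlaw : P.map X = π)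
    -- (vi): P({X' ∈ B''} ∩ C | X ∈ B) = P({Y ∈ B''} ∩ C) whenever π(B) > 0
    (hvi : ∀ F : Set 𝓧', MeasurableSet F → ∀ B : Set 𝓧, MeasurableSet B → 0 < π B →
      P[X' ⁻¹' (B' ∩ F) ∩ C | X ⁻¹' B] = P (Y ⁻¹' (B' ∩ F) ∩ C)) :
    ∀ B : Set 𝓧, MeasurableSet B → ∀ F : Set 𝓧', MeasurableSet F →
      P (X' ⁻¹' (B' ∩ F) ∩ C ∩ X ⁻¹' B) = P (X' ⁻¹' (B' ∩ F) ∩ C) * π B := by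
  intro B hB F hF
  have hlaw : P (X ⁻¹' B) = π B := by rw [← hXlaw, Measure.map_apply hXmeas hB]
  -- (vi) with `B = 𝓧` identifies the right-hand side of (vi) as `P({X' ∈ B''} ∩ C)`.
  have hY : P (X' ⁻¹' (B' ∩ F) ∩ C) = P (Y ⁻¹' (B' ∩ F) ∩ C) := by
    simpa using hvi F hF Set.univ .univ (by simp)
  rw [← hlaw]
  refine measure_inter_eq_mul_of_cond_eq (hXmeas hB) fun hB0 => ?_
  exact (hvi F hF B hB (hlaw ▸ pos_iff_ne_zero.2 hB0)).trans hY.symm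

/-- Proposition 6.1 of Fill–Machida–Murdoch–Rosenthal:
under assumptions (iv), (v), (vi), for every `B ∈ ℬ` and every `B'' ∈ ℬ''`
(i.e. `B'' = B' ∩ F` with `F ∈ ℬ'`),
`P({X' ∈ B''} ∩ C ∩ {X ∈ B}) = P({X' ∈ B''} ∩ C) ⬝ π(B)`. -/
theorem stmt0
    {Ω 𝓧 𝓧' : Type*} [MeasurableSpace Ω] [MeasurableSpace 𝓧] [MeasurableSpace 𝓧']
    (P : Measure Ω) [IsProbabilityMeasure P]
    (π : Measure 𝓧) [IsProbabilityMeasure π]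
    (B' : Set 𝓧')
    (X : Ω → 𝓧) (X' : Ω → 𝓧') (Y : Ω → 𝓧') (C : Set Ω)
    -- (iv): X is measurable with law π
    (hXmeas : Measurable X) (hXlaw : P.map X = π)
    -- (v): for every B'' in the trace σ-field on B',
    -- {X' ∈ B''} ∩ C and {Y ∈ B''} ∩ C are measurable
    (hv : ∀ F : Set 𝓧', MeasurableSet F →
      MeasurableSet (X' ⁻¹' (B' ∩ F) ∩ C) ∧ MeasurableSet (Y ⁻¹' (B' ∩ F) ∩ C))
    -- (vi): P({X' ∈ B''} ∩ C | X ∈ B) = P({Y ∈ B''} ∩ C) whenever π(B) > 0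
    (hvi : ∀ F : Set 𝓧', MeasurableSet F → ∀ B : Set 𝓧, MeasurableSet B → 0 < π B →
      P[X' ⁻¹' (B' ∩ F) ∩ C | X ⁻¹' B] = P (Y ⁻¹' (B' ∩ F) ∩ C)) :
    ∀ B : Set 𝓧, MeasurableSet B → ∀ F : Set 𝓧', MeasurableSet F →
      P (X' ⁻¹' (B' ∩ F) ∩ C ∩ X ⁻¹' B) = P (X' ⁻¹' (B' ∩ F) ∩ C) * π B :=
  stmt0_general P π B' X X' Y C hXmeas hXlaw hvi
end

section
/- Under assumptions (iv), (v), (vi), if P({X' ∈ B'} ∩ C) > 0, then the conditional law of X given the event {X' ∈ B'} ∩ C is π; that is, for every B ∈ ℬ, P(X ∈ B | {X' ∈ B'} ∩ C) = π(B). (Corollary 6.2 of the paper; note that B' = B' ∩ 𝒳' ∈ ℬ'', so {X' ∈ B'} ∩ C ∈ 𝒜.) -/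
open MeasureTheory ProbabilityTheory

/-- Corollary 6.2 of Fill–Machida–Murdoch–Rosenthal:
under assumptions (iv), (v), (vi), if `P({X' ∈ B'} ∩ C) > 0` then the
conditional law of `X` given `{X' ∈ B'} ∩ C` is `π`. -/
theorem stmt1
    {Ω 𝓧 𝓧' : Type*} [MeasurableSpace Ω] [MeasurableSpace 𝓧] [MeasurableSpace 𝓧']
    (P : Measure Ω) [IsProbabilityMeasure P]
    (π : Measure 𝓧) [IsProbabilityMeasure π]
    (B' : Set 𝓧')
    (X : Ω → 𝓧) (X' : Ω → 𝓧') (Y : Ω → 𝓧') (C : Set Ω)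
    -- (iv): X is measurable with law π
    (hXmeas : Measurable X) (hXlaw : P.map X = π)
    -- (v): for every B'' in the trace σ-field on B',
    -- {X' ∈ B''} ∩ C and {Y ∈ B''} ∩ C are measurable
    (hv : ∀ F : Set 𝓧', MeasurableSet F →
      MeasurableSet (X' ⁻¹' (B' ∩ F) ∩ C) ∧ MeasurableSet (Y ⁻¹' (B' ∩ F) ∩ C))
    -- (vi): P({X' ∈ B''} ∩ C | X ∈ B) = P({Y ∈ B''} ∩ C) whenever π(B) > 0
    (hvi : ∀ F : Set 𝓧', MeasurableSet F → ∀ B : Set 𝓧, MeasurableSet B → 0 < π B →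
      P[X' ⁻¹' (B' ∩ F) ∩ C | X ⁻¹' B] = P (Y ⁻¹' (B' ∩ F) ∩ C))
    -- positivity of the acceptance probability
    (hpos : 0 < P (X' ⁻¹' B' ∩ C)) :
    ∀ B : Set 𝓧, MeasurableSet B → P[X ⁻¹' B | X' ⁻¹' B' ∩ C] = π B := by
  intro B hB
  have hA : MeasurableSet (X' ⁻¹' B' ∩ C) := by
    have := (hv Set.univ MeasurableSet.univ).1
    simpa using this
  have hPB : ∀ s : Set 𝓧, MeasurableSet s → P (X ⁻¹' s) = π s := by
    intro s hs; rw [← hXlaw, Measure.map_apply hXmeas hs]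
  have ha : P (Y ⁻¹' B' ∩ C) = P (X' ⁻¹' B' ∩ C) := by
    have h := hvi Set.univ MeasurableSet.univ Set.univ MeasurableSet.univ (by simp)
    rw [Set.preimage_univ, cond_univ, Set.inter_univ] at h
    exact h.symm
  rw [cond_apply hA]
  by_cases hB0 : π B = 0
  · have : P (X' ⁻¹' B' ∩ C ∩ X ⁻¹' B) = 0 :=
      measure_mono_null Set.inter_subset_right (by rw [hPB B hB]; exact hB0)
    rw [this, hB0, mul_zero]
  · have h := hvi Set.univ MeasurableSet.univ B hB (pos_iff_ne_zero.mpr hB0)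
    rw [Set.inter_univ, cond_apply (hXmeas hB)] at h
    rw [ha, hPB B hB] at h
    have hkey : P (X ⁻¹' B ∩ (X' ⁻¹' B' ∩ C)) = P (X' ⁻¹' B' ∩ C) * π B := by
      have hfin : π B ≠ ⊤ := measure_ne_top π B
      rw [← h, mul_comm ((π B)⁻¹) _, mul_assoc, ENNReal.inv_mul_cancel hB0 hfin, mul_one]
    rw [Set.inter_comm (X' ⁻¹' B' ∩ C) (X ⁻¹' B), hkey, ← mul_assoc,
      ENNReal.inv_mul_cancel hpos.ne' (measure_ne_top P _), one_mul]
end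

section
/- Under assumptions (iv), (v), (vi) on the first space and (ix), (x) linking it to the second space, for every B ∈ ℬ and every B'' ∈ ℬ'' one has 𝐏({𝐗' ∈ B''} ∩ 𝐂 ∩ {𝐗 ∈ B}) = 𝐏({𝐗' ∈ B''} ∩ 𝐂) · π(B). (Proposition 6.4 of the paper.) -/
open MeasureTheory ProbabilityTheory

/-- Proposition 6.4 of Fill–Machida–Murdoch–Rosenthal:
under assumptions (iv), (v), (vi) on the first space and (ix), (x) linking it to
the second space, `𝐏({𝐗' ∈ B''} ∩ 𝐂 ∩ {𝐗 ∈ B}) = 𝐏({𝐗' ∈ B''} ∩ 𝐂) ⬝ π(B)`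
for every `B ∈ ℬ` and `B'' ∈ ℬ''`.  The trace σ-field `ℬ''` on `B'` is realized
as the subtype σ-field on `↥B'`, whose measurable sets are exactly the sets
`Subtype.val ⁻¹' F` with `F ∈ ℬ'`, corresponding to `B' ∩ F`. -/
theorem stmt3
    {Ω bΩ 𝓧 𝓧' : Type*} [MeasurableSpace Ω] [MeasurableSpace bΩ]
    [MeasurableSpace 𝓧] [MeasurableSpace 𝓧']
    (P : Measure Ω) [IsProbabilityMeasure P]
    (bP : Measure bΩ) [IsProbabilityMeasure bP]
    (π : Measure 𝓧) [IsProbabilityMeasure π]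
    (B' : Set 𝓧')
    (X : Ω → 𝓧) (X' : Ω → 𝓧') (Y : Ω → 𝓧') (C : Set Ω)
    (bX : bΩ → 𝓧) (bX' : bΩ → 𝓧') (bC : Set bΩ)
    -- (iv): X is measurable with law π
    (hXmeas : Measurable X) (hXlaw : P.map X = π)
    -- (v)
    (hv : ∀ F : Set 𝓧', MeasurableSet F →
      MeasurableSet (X' ⁻¹' (B' ∩ F) ∩ C) ∧ MeasurableSet (Y ⁻¹' (B' ∩ F) ∩ C))
    -- (vi)
    (hvi : ∀ F : Set 𝓧', MeasurableSet F → ∀ B : Set 𝓧, MeasurableSet B → 0 < π B →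
      P[X' ⁻¹' (B' ∩ F) ∩ C | X ⁻¹' B] = P (Y ⁻¹' (B' ∩ F) ∩ C))
    -- (viii): 𝐗 is measurable
    (hbXmeas : Measurable bX)
    -- (ix)
    (hix : ∀ F : Set 𝓧', MeasurableSet F → MeasurableSet (bX' ⁻¹' (B' ∩ F) ∩ bC))
    -- the measures ν_B on (B', ℬ''), ν_B(B'') = P({X' ∈ B''} ∩ C ∩ {X ∈ B})
    (ν : Set 𝓧 → Measure ↥B')
    (hν : ∀ B : Set 𝓧, MeasurableSet B → ∀ F : Set 𝓧', MeasurableSet F →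
      ν B ((Subtype.val : ↥B' → 𝓧') ⁻¹' F) = P (X' ⁻¹' (B' ∩ F) ∩ C ∩ X ⁻¹' B))
    -- (x): a density D on B', not depending on B
    (D : ↥B' → NNReal) (hDmeas : Measurable D)
    (hx : ∀ B : Set 𝓧, MeasurableSet B → ∀ F : Set 𝓧', MeasurableSet F →
      bP (bX' ⁻¹' (B' ∩ F) ∩ bC ∩ bX ⁻¹' B)
        = ∫⁻ u in (Subtype.val : ↥B' → 𝓧') ⁻¹' F, (D u : ENNReal) ∂(ν B)) :
    ∀ B : Set 𝓧, MeasurableSet B → ∀ F : Set 𝓧', MeasurableSet F →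
      bP (bX' ⁻¹' (B' ∩ F) ∩ bC ∩ bX ⁻¹' B) = bP (bX' ⁻¹' (B' ∩ F) ∩ bC) * π B := by
  intro B hB F hF
  -- map law gives P (X ⁻¹' B) = π B
  have hmap : ∀ B : Set 𝓧, MeasurableSet B → P (X ⁻¹' B) = π B := by
    intro B hB
    rw [← hXlaw, Measure.map_apply hXmeas hB]
  -- key identity on the first space
  have key : ∀ (B : Set 𝓧), MeasurableSet B → ∀ F : Set 𝓧', MeasurableSet F →
      P (X' ⁻¹' (B' ∩ F) ∩ C ∩ X ⁻¹' B) = P (Y ⁻¹' (B' ∩ F) ∩ C) * π B := by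
    intro B hB F hF
    rcases eq_or_lt_of_le (zero_le : 0 ≤ π B) with h0 | hpos
    · have hPB : P (X ⁻¹' B) = 0 := by rw [hmap B hB, ← h0]
      have h1 : P (X' ⁻¹' (B' ∩ F) ∩ C ∩ X ⁻¹' B) = 0 :=
        measure_mono_null (Set.inter_subset_right) hPB
      rw [h1, ← h0, mul_zero]
    · have hc := hvi F hF B hB hpos
      rw [cond_apply (hXmeas hB) P] at hc
      have hPB : P (X ⁻¹' B) = π B := hmap B hB
      have hne : π B ≠ 0 := hpos.ne'
      have hfin : π B ≠ ⊤ := (measure_lt_top π B).ne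
      have : P (X ⁻¹' B ∩ (X' ⁻¹' (B' ∩ F) ∩ C)) = P (Y ⁻¹' (B' ∩ F) ∩ C) * π B := by
        rw [hPB] at hc
        calc P (X ⁻¹' B ∩ (X' ⁻¹' (B' ∩ F) ∩ C))
            = π B * ((π B)⁻¹ * P (X ⁻¹' B ∩ (X' ⁻¹' (B' ∩ F) ∩ C))) := by
              rw [← mul_assoc, ENNReal.mul_inv_cancel hne hfin, one_mul]
          _ = P (Y ⁻¹' (B' ∩ F) ∩ C) * π B := by rw [hc, mul_comm]
      rw [Set.inter_comm] at this
      exact this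
  -- ν B = π B • ν univ
  have hνeq : ν B = (π B) • ν Set.univ := by
    ext s hs
    obtain ⟨F', hF', rfl⟩ := hs
    rw [hν B hB F' hF', Measure.smul_apply, smul_eq_mul, hν Set.univ MeasurableSet.univ F' hF',
      key B hB F' hF', key Set.univ MeasurableSet.univ F' hF', measure_univ, mul_one, mul_comm]
  have huniv : bP (bX' ⁻¹' (B' ∩ F) ∩ bC) =
      ∫⁻ u in (Subtype.val : ↥B' → 𝓧') ⁻¹' F, (D u : ENNReal) ∂(ν Set.univ) := by
    have := hx Set.univ MeasurableSet.univ F hF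
    rwa [Set.preimage_univ, Set.inter_univ] at this
  rw [hx B hB F hF, huniv, hνeq, Measure.restrict_smul, lintegral_smul_measure]
  exact mul_comm _ _
end

section
/- Under assumptions (iv), (v), (vi) on the first space and (ix), (x) linking it to the second space, if 𝐏({𝐗' ∈ B'} ∩ 𝐂) > 0, then for every B ∈ ℬ, 𝐏(𝐗 ∈ B | {𝐗' ∈ B'} ∩ 𝐂) = π(B). (Corollary 6.5 of the paper.) -/
open MeasureTheory ProbabilityTheory
open scoped ENNReal

/-!
By (iv) and (vi), `P({X' ∈ B''} ∩ C ∩ {X ∈ B}) = π(B) · P({Y ∈ B''} ∩ C)`, so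
`ν_B = π(B) • ν_𝒳` for every `B`. Since the density `D` in (x) does not depend on `B`,
the factor `π(B)` passes through the integral, giving
`𝐏({𝐗' ∈ B'} ∩ 𝐂 ∩ {𝐗 ∈ B}) = π(B) · 𝐏({𝐗' ∈ B'} ∩ 𝐂)`.
-/

lemma measure_inter_preimage_eq_mul_of_cond_eq {Ω 𝓧 : Type*} [MeasurableSpace Ω]
    [MeasurableSpace 𝓧] {P : Measure Ω} [IsFiniteMeasure P] {π : Measure 𝓧} {X : Ω → 𝓧}
    (hX : Measurable X) (hπ : P.map X = π) {A : Set Ω} {c : ℝ≥0∞}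
    (hA : ∀ B, MeasurableSet B → 0 < π B → P[A | X ⁻¹' B] = c) {B : Set 𝓧}
    (hB : MeasurableSet B) :
    P (A ∩ X ⁻¹' B) = π B * c := by
  have hPX : P (X ⁻¹' B) = π B := by rw [← hπ, Measure.map_apply hX hB]
  rw [Set.inter_comm, ← cond_mul_eq_inter (hX hB), hPX, mul_comm]
  rcases eq_zero_or_pos (π B) with h | h
  · simp [h]
  · rw [hA B hB h]

lemma Measure.ext_subtype_val {α : Type*} [MeasurableSpace α] {s : Set α} {μ ν : Measure s}
    (h : ∀ F, MeasurableSet F → μ (Subtype.val ⁻¹' F) = ν (Subtype.val ⁻¹' F)) : μ = ν := by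
  ext _ ⟨F, hF, rfl⟩
  exact h F hF

lemma cond_preimage_eq_of_lintegral_eq {bΩ 𝓧 E : Type*} [MeasurableSpace bΩ] [MeasurableSpace 𝓧]
    [MeasurableSpace E] {bP : Measure bΩ} [IsFiniteMeasure bP] {π : Measure 𝓧}
    [IsProbabilityMeasure π] {S : Set bΩ} {bX : bΩ → 𝓧} {ν : Set 𝓧 → Measure E} {D : E → ℝ≥0∞}
    (hS : MeasurableSet S) (hS₀ : bP S ≠ 0) (hν : ∀ B, MeasurableSet B → ν B = π B • ν Set.univ)
    (hD : ∀ B, MeasurableSet B → bP (S ∩ bX ⁻¹' B) = ∫⁻ u, D u ∂ν B)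
    {B : Set 𝓧} (hB : MeasurableSet B) :
    bP[bX ⁻¹' B | S] = π B := by
  have hfactor : bP (S ∩ bX ⁻¹' B) = π B * bP S := by
    have hS_eq : bP S = ∫⁻ u, D u ∂ν Set.univ := by simpa using hD Set.univ .univ
    rw [hD B hB, hν B hB, lintegral_smul_measure, smul_eq_mul, hS_eq]
  rw [cond_apply hS, hfactor, mul_left_comm, ENNReal.inv_mul_cancel hS₀ (measure_ne_top bP S),
    mul_one]

theorem stmt4_general
    {Ω bΩ 𝓧 𝓧' : Type*} [MeasurableSpace Ω] [MeasurableSpace bΩ]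
    [MeasurableSpace 𝓧] [MeasurableSpace 𝓧']
    (P : Measure Ω) [IsProbabilityMeasure P]
    (bP : Measure bΩ) [IsProbabilityMeasure bP]
    (π : Measure 𝓧) [IsProbabilityMeasure π]
    (B' : Set 𝓧')
    (X : Ω → 𝓧) (X' : Ω → 𝓧') (Y : Ω → 𝓧') (C : Set Ω)
    (bX : bΩ → 𝓧) (bX' : bΩ → 𝓧') (bC : Set bΩ)
    -- (iv): X is measurable with law π
    (hXmeas : Measurable X) (hXlaw : P.map X = π)
    -- (vi)
    (hvi : ∀ F : Set 𝓧', MeasurableSet F → ∀ B : Set 𝓧, MeasurableSet B → 0 < π B →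
      P[X' ⁻¹' (B' ∩ F) ∩ C | X ⁻¹' B] = P (Y ⁻¹' (B' ∩ F) ∩ C))
    -- (ix)
    (hix : ∀ F : Set 𝓧', MeasurableSet F → MeasurableSet (bX' ⁻¹' (B' ∩ F) ∩ bC))
    -- the measures ν_B on (B', ℬ''), ν_B(B'') = P({X' ∈ B''} ∩ C ∩ {X ∈ B})
    (ν : Set 𝓧 → Measure ↥B')
    (hν : ∀ B : Set 𝓧, MeasurableSet B → ∀ F : Set 𝓧', MeasurableSet F →
      ν B ((Subtype.val : ↥B' → 𝓧') ⁻¹' F) = P (X' ⁻¹' (B' ∩ F) ∩ C ∩ X ⁻¹' B))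
    -- (x): a density D on B', not depending on B
    (D : ↥B' → NNReal)
    (hx : ∀ B : Set 𝓧, MeasurableSet B → ∀ F : Set 𝓧', MeasurableSet F →
      bP (bX' ⁻¹' (B' ∩ F) ∩ bC ∩ bX ⁻¹' B)
        = ∫⁻ u in (Subtype.val : ↥B' → 𝓧') ⁻¹' F, (D u : ENNReal) ∂(ν B)) 
    -- positivity of the acceptance probability
    (hpos : 0 < bP (bX' ⁻¹' B' ∩ bC)) :
    ∀ B : Set 𝓧, MeasurableSet B → bP[bX ⁻¹' B | bX' ⁻¹' B' ∩ bC] = π B := by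
  have hfactor : ∀ F, MeasurableSet F → ∀ B, MeasurableSet B →
      P (X' ⁻¹' (B' ∩ F) ∩ C ∩ X ⁻¹' B) = π B * P (Y ⁻¹' (B' ∩ F) ∩ C) :=
    fun F hF B hB ↦ measure_inter_preimage_eq_mul_of_cond_eq hXmeas hXlaw (hvi F hF) hB
  have hν_smul : ∀ B, MeasurableSet B → ν B = π B • ν Set.univ := fun B hB ↦
    Measure.ext_subtype_val fun F hF ↦ by
      rw [Measure.smul_apply, smul_eq_mul, hν B hB F hF, hν Set.univ .univ F hF, hfactor F hF B hB,
        hfactor F hF Set.univ .univ, measure_univ, one_mul]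
  have hS : MeasurableSet (bX' ⁻¹' B' ∩ bC) := by simpa using hix Set.univ .univ
  intro B hB
  refine cond_preimage_eq_of_lintegral_eq (D := fun u ↦ D u) hS hpos.ne' hν_smul
    (fun B hB ↦ ?_) hB
  simpa using hx B hB Set.univ .univ

/-- Corollary 6.5 of Fill–Machida–Murdoch–Rosenthal:
under assumptions (iv), (v), (vi) on the first space and (ix), (x) linking it to
the second space, if `𝐏({𝐗' ∈ B'} ∩ 𝐂) > 0` then the conditional law of `𝐗`
given `{𝐗' ∈ B'} ∩ 𝐂` is `π`.  The trace σ-field `ℬ''` on `B'` is realized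
as the subtype σ-field on `↥B'`, whose measurable sets are exactly the sets
`Subtype.val ⁻¹' F` with `F ∈ ℬ'`, corresponding to `B' ∩ F`. -/
theorem stmt4
    {Ω bΩ 𝓧 𝓧' : Type*} [MeasurableSpace Ω] [MeasurableSpace bΩ]
    [MeasurableSpace 𝓧] [MeasurableSpace 𝓧']
    (P : Measure Ω) [IsProbabilityMeasure P]
    (bP : Measure bΩ) [IsProbabilityMeasure bP]
    (π : Measure 𝓧) [IsProbabilityMeasure π]
    (B' : Set 𝓧')
    (X : Ω → 𝓧) (X' : Ω → 𝓧') (Y : Ω → 𝓧') (C : Set Ω)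
    (bX : bΩ → 𝓧) (bX' : bΩ → 𝓧') (bC : Set bΩ)
    -- (iv): X is measurable with law π
    (hXmeas : Measurable X) (hXlaw : P.map X = π)
    -- (v)
    (hv : ∀ F : Set 𝓧', MeasurableSet F →
      MeasurableSet (X' ⁻¹' (B' ∩ F) ∩ C) ∧ MeasurableSet (Y ⁻¹' (B' ∩ F) ∩ C))
    -- (vi)
    (hvi : ∀ F : Set 𝓧', MeasurableSet F → ∀ B : Set 𝓧, MeasurableSet B → 0 < π B →
      P[X' ⁻¹' (B' ∩ F) ∩ C | X ⁻¹' B] = P (Y ⁻¹' (B' ∩ F) ∩ C))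
    -- (viii): 𝐗 is measurable
    (hbXmeas : Measurable bX)
    -- (ix)
    (hix : ∀ F : Set 𝓧', MeasurableSet F → MeasurableSet (bX' ⁻¹' (B' ∩ F) ∩ bC))
    -- the measures ν_B on (B', ℬ''), ν_B(B'') = P({X' ∈ B''} ∩ C ∩ {X ∈ B})
    (ν : Set 𝓧 → Measure ↥B')
    (hν : ∀ B : Set 𝓧, MeasurableSet B → ∀ F : Set 𝓧', MeasurableSet F →
      ν B ((Subtype.val : ↥B' → 𝓧') ⁻¹' F) = P (X' ⁻¹' (B' ∩ F) ∩ C ∩ X ⁻¹' B))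
    -- (x): a density D on B', not depending on B
    (D : ↥B' → NNReal) (hDmeas : Measurable D)
    (hx : ∀ B : Set 𝓧, MeasurableSet B → ∀ F : Set 𝓧', MeasurableSet F →
      bP (bX' ⁻¹' (B' ∩ F) ∩ bC ∩ bX ⁻¹' B)
        = ∫⁻ u in (Subtype.val : ↥B' → 𝓧') ⁻¹' F, (D u : ENNReal) ∂(ν B)) 
    -- positivity of the acceptance probability
    (hpos : 0 < bP (bX' ⁻¹' B' ∩ bC)) :
    ∀ B : Set 𝓧, MeasurableSet B → bP[bX ⁻¹' B | bX' ⁻¹' B' ∩ bC] = π B :=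
  stmt4_general P bP π B' X X' Y C bX bX' bC hXmeas hXlaw hvi hix ν hν D hx hpos
end

section
/- Under assumptions (iv), (v), (vi) on the first space and (ix), (x) linking it to the second space, all taken with B' = 𝒳', suppose in addition that 𝐗' is measurable from 𝐀 to ℬ' and that 𝐏(𝐂) > 0. Then 𝐗' and 𝐗 are conditionally independent given 𝐂 and the conditional law of 𝐗 given 𝐂 is π: for every B ∈ ℬ and F ∈ ℬ', 𝐏({𝐗' ∈ F} ∩ {𝐗 ∈ B} | 𝐂) = 𝐏(𝐗' ∈ F | 𝐂) · 𝐏(𝐗 ∈ B | 𝐂), and 𝐏(𝐗 ∈ B | 𝐂) = π(B). (Corollary 6.6 of the paper.) -/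
/-!
By (vi), conditioning on `{X ∈ B}` does not change the probability of `{X' ∈ F} ∩ C`, so
`ν_B = π(B) • ν_𝒳'`. Integrating the density `D` against both sides of this identity, (x) gives
`𝐏({𝐗' ∈ F} ∩ 𝐂 ∩ {𝐗 ∈ B}) = π(B) 𝐏({𝐗' ∈ F} ∩ 𝐂)`; dividing by `𝐏(𝐂)` yields both claims.
-/

open MeasureTheory ProbabilityTheory Set

open scoped ENNReal

section

variable {Ω α : Type*} [MeasurableSpace Ω] [MeasurableSpace α]

theorem measure_preimage_inter_eq_mul_of_cond_eq {μ : Measure Ω} [IsProbabilityMeasure μ]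
    {X : Ω → α} (hX : Measurable X) {E : Set Ω} {c : ℝ≥0∞}
    (hcond : ∀ B, MeasurableSet B → 0 < μ (X ⁻¹' B) → μ[E | X ⁻¹' B] = c)
    {B : Set α} (hB : MeasurableSet B) : μ (X ⁻¹' B ∩ E) = μ E * μ (X ⁻¹' B) := by
  have hc : c = μ E := by simpa using (hcond univ MeasurableSet.univ (by simp)).symm
  rw [← cond_mul_eq_inter (hX hB)]
  rcases eq_zero_or_pos (μ (X ⁻¹' B)) with hzero | hpos
  · simp [hzero]
  · rw [hcond B hB hpos, hc]

theorem cond_eq_of_measure_inter_eq_mul {μ : Measure Ω} {s u : Set Ω} {c : ℝ≥0∞}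
    (hs : MeasurableSet s) (hs₀ : μ s ≠ 0) (hs_top : μ s ≠ ∞) (h : μ (s ∩ u) = c * μ s) :
    μ[u | s] = c := by
  rw [cond_apply hs, h, mul_comm c, ← mul_assoc, ENNReal.inv_mul_cancel hs₀ hs_top, one_mul]

theorem cond_inter_eq_cond_mul_of_measure_inter_eq_mul {μ : Measure Ω} {s t u : Set Ω}
    {c : ℝ≥0∞} (hs : MeasurableSet s) (h : μ (s ∩ t ∩ u) = c * μ (s ∩ t)) :
    μ[t ∩ u | s] = μ[t | s] * c := by
  rw [cond_apply hs, cond_apply hs, ← inter_assoc, h, mul_comm c, mul_assoc]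

end

theorem stmt5_general
    {Ω bΩ 𝓧 𝓧' : Type*} [MeasurableSpace Ω] [MeasurableSpace bΩ]
    [MeasurableSpace 𝓧] [MeasurableSpace 𝓧']
    (P : Measure Ω) [IsProbabilityMeasure P]
    (bP : Measure bΩ) [IsProbabilityMeasure bP]
    (π : Measure 𝓧) [IsProbabilityMeasure π]
    (X : Ω → 𝓧) (X' : Ω → 𝓧') (Y : Ω → 𝓧') (C : Set Ω)
    (bX : bΩ → 𝓧) (bX' : bΩ → 𝓧') (bC : Set bΩ)
    -- (iv): X is measurable with law π
    (hXmeas : Measurable X) (hXlaw : P.map X = π)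
    -- (vi) with B' = 𝒳'
    (hvi : ∀ F : Set 𝓧', MeasurableSet F → ∀ B : Set 𝓧, MeasurableSet B → 0 < π B →
      P[X' ⁻¹' F ∩ C | X ⁻¹' B] = P (Y ⁻¹' F ∩ C))
    -- (ix) with B' = 𝒳'
    (hix : ∀ F : Set 𝓧', MeasurableSet F → MeasurableSet (bX' ⁻¹' F ∩ bC))
    -- the measures ν_B on (𝒳', ℬ'), ν_B(F) = P({X' ∈ F} ∩ C ∩ {X ∈ B})
    (ν : Set 𝓧 → Measure 𝓧')
    (hν : ∀ B : Set 𝓧, MeasurableSet B → ∀ F : Set 𝓧', MeasurableSet F →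
      ν B F = P (X' ⁻¹' F ∩ C ∩ X ⁻¹' B))
    -- (x): a density D on 𝒳', not depending on B
    (D : 𝓧' → NNReal)
    (hx : ∀ B : Set 𝓧, MeasurableSet B → ∀ F : Set 𝓧', MeasurableSet F →
      bP (bX' ⁻¹' F ∩ bC ∩ bX ⁻¹' B) = ∫⁻ u in F, (D u : ENNReal) ∂(ν B))
    -- 𝐏(𝐂) > 0
    (hpos : 0 < bP bC) :
    (∀ B : Set 𝓧, MeasurableSet B → ∀ F : Set 𝓧', MeasurableSet F →
        bP[bX' ⁻¹' F ∩ bX ⁻¹' B | bC] = bP[bX' ⁻¹' F | bC] * bP[bX ⁻¹' B | bC]) ∧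
      (∀ B : Set 𝓧, MeasurableSet B → bP[bX ⁻¹' B | bC] = π B) := by
  have hlaw : ∀ B, MeasurableSet B → P (X ⁻¹' B) = π B := fun B hB => by
    rw [← hXlaw, Measure.map_apply hXmeas hB]
  have hνB : ∀ B, MeasurableSet B → ν B = π B • ν univ := by
    intro B hB
    ext F hF
    have hindep := measure_preimage_inter_eq_mul_of_cond_eq hXmeas
      (fun B' hB' hB'pos => hvi F hF B' hB' (hlaw B' hB' ▸ hB'pos)) hB
    rw [hν B hB F hF, Measure.smul_apply, smul_eq_mul, hν univ .univ F hF, preimage_univ,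
      inter_univ, inter_comm, hindep, hlaw B hB, mul_comm]
  have hsplit : ∀ B, MeasurableSet B → ∀ F, MeasurableSet F →
      bP (bC ∩ bX' ⁻¹' F ∩ bX ⁻¹' B) = π B * bP (bC ∩ bX' ⁻¹' F) := by
    intro B hB F hF
    have huniv := hx univ .univ F hF
    rw [preimage_univ, inter_univ] at huniv
    rw [inter_comm bC, hx B hB F hF, hνB B hB, Measure.restrict_smul,
      lintegral_smul_measure, smul_eq_mul, huniv]
  have hbC : MeasurableSet bC := by simpa using hix univ .univ
  have hcondX : ∀ B, MeasurableSet B → bP[bX ⁻¹' B | bC] = π B := fun B hB =>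
    cond_eq_of_measure_inter_eq_mul hbC hpos.ne' (measure_ne_top _ _)
      (by simpa using hsplit B hB univ .univ)
  refine ⟨fun B hB F hF => ?_, hcondX⟩
  rw [cond_inter_eq_cond_mul_of_measure_inter_eq_mul hbC (hsplit B hB F hF), hcondX B hB]

/-- Corollary 6.6 of Fill–Machida–Murdoch–Rosenthal:
under assumptions (iv), (v), (vi) on the first space and (ix), (x) linking it to
the second space, all taken with `B' = 𝒳'`, if moreover `𝐗'` is measurable and
`𝐏(𝐂) > 0`, then `𝐗'` and `𝐗` are conditionally independent given `𝐂`, and the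
conditional law of `𝐗` given `𝐂` is `π`. -/
theorem stmt5
    {Ω bΩ 𝓧 𝓧' : Type*} [MeasurableSpace Ω] [MeasurableSpace bΩ]
    [MeasurableSpace 𝓧] [MeasurableSpace 𝓧']
    (P : Measure Ω) [IsProbabilityMeasure P]
    (bP : Measure bΩ) [IsProbabilityMeasure bP]
    (π : Measure 𝓧) [IsProbabilityMeasure π]
    (X : Ω → 𝓧) (X' : Ω → 𝓧') (Y : Ω → 𝓧') (C : Set Ω)
    (bX : bΩ → 𝓧) (bX' : bΩ → 𝓧') (bC : Set bΩ)
    -- (iv): X is measurable with law π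
    (hXmeas : Measurable X) (hXlaw : P.map X = π)
    -- (v) with B' = 𝒳'
    (hv : ∀ F : Set 𝓧', MeasurableSet F →
      MeasurableSet (X' ⁻¹' F ∩ C) ∧ MeasurableSet (Y ⁻¹' F ∩ C))
    -- (vi) with B' = 𝒳'
    (hvi : ∀ F : Set 𝓧', MeasurableSet F → ∀ B : Set 𝓧, MeasurableSet B → 0 < π B →
      P[X' ⁻¹' F ∩ C | X ⁻¹' B] = P (Y ⁻¹' F ∩ C))
    -- (viii): 𝐗 is measurable
    (hbXmeas : Measurable bX)
    -- (ix) with B' = 𝒳'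
    (hix : ∀ F : Set 𝓧', MeasurableSet F → MeasurableSet (bX' ⁻¹' F ∩ bC))
    -- the measures ν_B on (𝒳', ℬ'), ν_B(F) = P({X' ∈ F} ∩ C ∩ {X ∈ B})
    (ν : Set 𝓧 → Measure 𝓧')
    (hν : ∀ B : Set 𝓧, MeasurableSet B → ∀ F : Set 𝓧', MeasurableSet F →
      ν B F = P (X' ⁻¹' F ∩ C ∩ X ⁻¹' B))
    -- (x): a density D on 𝒳', not depending on B
    (D : 𝓧' → NNReal) (hDmeas : Measurable D)
    (hx : ∀ B : Set 𝓧, MeasurableSet B → ∀ F : Set 𝓧', MeasurableSet F →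
      bP (bX' ⁻¹' F ∩ bC ∩ bX ⁻¹' B) = ∫⁻ u in F, (D u : ENNReal) ∂(ν B))
    -- 𝐗' is measurable
    (hbX'meas : Measurable bX')
    -- 𝐏(𝐂) > 0
    (hpos : 0 < bP bC) :
    (∀ B : Set 𝓧, MeasurableSet B → ∀ F : Set 𝓧', MeasurableSet F →
        bP[bX' ⁻¹' F ∩ bX ⁻¹' B | bC] = bP[bX' ⁻¹' F | bC] * bP[bX ⁻¹' B | bC]) ∧
      (∀ B : Set 𝓧, MeasurableSet B → bP[bX ⁻¹' B | bC] = π B) :=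
  stmt5_general P bP π X X' Y C bX bX' bC hXmeas hXlaw hvi hix ν hν D hx hpos
end

section
/- Let 𝒳 be a nonempty separable metric space equipped with its Borel σ-field, let (𝒰, ℱ) be a measurable space, let t ≥ 1, and let φ : 𝒳 × 𝒰 → 𝒳 be jointly measurable and such that x ↦ φ(x, u) is continuous for each fixed u ∈ 𝒰. Define the iterates φ^s : 𝒳 × 𝒰^s → 𝒳 by φ^1 := φ and φ^s(x; u₁, …, u_s) := φ(φ^{s−1}(x; u₁, …, u_{s−1}), u_s). Then the coalescence set C := { (u₁, …, u_t) ∈ 𝒰^t : the map x ↦ φ^t(x; u₁, …, u_t) is constant } belongs to the product σ-field ℱ^{⊗t}. (The measurability claim for the coalescence event proved in Section 6.2 of the paper.) -/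
/-- The iterates `φ^s` of a transition rule `φ`:
`φ^s(x; u₁, …, u_s) = φ(φ^{s-1}(x; u₁, …, u_{s-1}), u_s)`, `φ^0(x) = x`. -/
def iterRule {𝓧 𝓤 : Type*} (φ : 𝓧 × 𝓤 → 𝓧) : (s : ℕ) → 𝓧 → (Fin s → 𝓤) → 𝓧
  | 0, x, _ => x
  | s + 1, x, u => φ (iterRule φ s x (fun i => u i.castSucc), u (Fin.last s))

lemma measurable_iterRule {𝓧 𝓤 : Type*} [MeasurableSpace 𝓧] [MeasurableSpace 𝓤]
    (φ : 𝓧 × 𝓤 → 𝓧) (hφmeas : Measurable φ) :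
    ∀ (s : ℕ) (x : 𝓧), Measurable fun u : Fin s → 𝓤 => iterRule φ s x u := by
  intro s
  induction s with
  | zero => intro x; simpa [iterRule] using measurable_const
  | succ n ih =>
      intro x
      have h1 : Measurable fun u : Fin (n+1) → 𝓤 =>
          iterRule φ n x (fun i => u i.castSucc) :=
        (ih x).comp (measurable_pi_lambda _ fun i => measurable_pi_apply _)
      exact hφmeas.comp (h1.prodMk (measurable_pi_apply _))

lemma continuous_iterRule {𝓧 𝓤 : Type*} [MetricSpace 𝓧]
    (φ : 𝓧 × 𝓤 → 𝓧) (hφcont : ∀ u : 𝓤, Continuous fun x => φ (x, u)) :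
    ∀ (s : ℕ) (u : Fin s → 𝓤), Continuous fun x : 𝓧 => iterRule φ s x u := by
  intro s
  induction s with
  | zero => intro u; simpa [iterRule] using continuous_id'
  | succ n ih =>
      intro u
      exact (hφcont (u (Fin.last n))).comp (ih fun i => u i.castSucc)

/-- The measurability claim for the coalescence event proved in Section 6.2 of
Fill–Machida–Murdoch–Rosenthal: if `𝒳` is a nonempty separable metric space with
its Borel σ-field and the jointly measurable transition rule `φ` is continuous
in its `𝒳`-argument, then the set of driving sequences `(u₁, …, u_t)` for which
`x ↦ φ^t(x; u₁, …, u_t)` is constant is product-measurable. -/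
theorem stmt10
    {𝓧 𝓤 : Type*} [MetricSpace 𝓧] [TopologicalSpace.SeparableSpace 𝓧] [Nonempty 𝓧]
    [MeasurableSpace 𝓧] [BorelSpace 𝓧] [MeasurableSpace 𝓤]
    (t : ℕ) (ht : 1 ≤ t)
    (φ : 𝓧 × 𝓤 → 𝓧) (hφmeas : Measurable φ)
    (hφcont : ∀ u : 𝓤, Continuous fun x => φ (x, u)) :
    MeasurableSet {u : Fin t → 𝓤 | ∃ c : 𝓧, ∀ x : 𝓧, iterRule φ t x u = c} := by
  obtain ⟨D, hDcount, hDdense⟩ := TopologicalSpace.exists_countable_dense 𝓧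
  set x₀ : 𝓧 := Classical.arbitrary 𝓧
  have hset : {u : Fin t → 𝓤 | ∃ c : 𝓧, ∀ x : 𝓧, iterRule φ t x u = c}
      = ⋂ x ∈ D, {u : Fin t → 𝓤 | iterRule φ t x u = iterRule φ t x₀ u} := by
    ext u
    simp only [Set.mem_setOf_eq, Set.mem_iInter]
    constructor
    · rintro ⟨c, hc⟩ x _
      rw [hc x, hc x₀]
    · intro h
      refine ⟨iterRule φ t x₀ u, ?_⟩
      have := Continuous.ext_on hDdense (continuous_iterRule φ hφcont t u)
        continuous_const (fun x hx => h x hx)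
      exact fun x => congrFun this x
  rw [hset]
  haveI : SecondCountableTopology 𝓧 := UniformSpace.secondCountable_of_separable 𝓧
  refine MeasurableSet.biInter hDcount fun x _ => ?_
  have : {u : Fin t → 𝓤 | iterRule φ t x u = iterRule φ t x₀ u}
      = (fun u => (iterRule φ t x u, iterRule φ t x₀ u)) ⁻¹' Set.diagonal 𝓧 := by
    ext u; simp [Set.diagonal, eq_comm]
  rw [this]
  exact ((measurable_iterRule φ hφmeas t x).prodMk
    (measurable_iterRule φ hφmeas t x₀)) (isClosed_diagonal.measurableSet)
end
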